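/- Let R → S be a homomorphism of commutative rings making S a flat R-module, and let C be a cotorsion R-module. Then the S-module Hom_R(S, C) is a cotorsion S-module. -/

import Mathlib

open CategoryTheory Opposite

/-- A module `C` over a commutative ring `A` is cotorsion if `Ext¹_A(F, C) = 0` for
every flat `A`-module `F`. -/
def Cotorsion (A : Type) [CommRing A] (C : Type) [AddCommGroup C] [Module A C] : Prop :=
  ∀ (F : Type) [AddCommGroup F] [Module A F], Module.Flat A F →
    Subsingleton (((Ext A (ModuleCat A) 1).obj
      (op (ModuleCat.of A F))).obj (ModuleCat.of A C))

lemma ModuleCat.isZero_iff {A : Type} [Ring A] (M : ModuleCat A) :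
    Limits.IsZero M ↔ Subsingleton M := by
  constructor
  · intro h
    have h0 : (𝟙 M) = (0 : M ⟶ M) := h.eq_of_src _ _
    refine ⟨fun a b => ?_⟩
    have ha : a = (𝟙 M) a := rfl
    have hb : b = (𝟙 M) b := rfl
    rw [ha, hb, h0]
    rfl
  · intro h
    exact ModuleCat.isZero_of_subsingleton M

lemma ext_one_subsingleton_iff (A : Type) [CommRing A] (F C : ModuleCat A)
    (P : ProjectiveResolution F) :
    Subsingleton (((Ext A (ModuleCat A) 1).obj (op F)).obj C) ↔
      ∀ f : P.complex.X 1 ⟶ C, P.complex.d 2 1 ≫ f = 0 →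
        ∃ g : P.complex.X 0 ⟶ C, P.complex.d 1 0 ≫ g = f := by
  have e := P.isoExt (R := A) 1 C
  set K := P.complex.linearYonedaObj A C with hK
  rw [Equiv.subsingleton_congr e.toLinearEquiv.toEquiv,
    ← ModuleCat.isZero_iff, ← HomologicalComplex.exactAt_iff_isZero_homology,
    HomologicalComplex.exactAt_iff' K 0 1 2 (by simp) (by simp),
    ShortComplex.moduleCat_exact_iff]
  constructor
  · intro h f hf
    obtain ⟨g, hg⟩ := h f hf
    exact ⟨g, hg⟩
  · intro h f hf
    exact h f hf

lemma Cotorsion.exists_section {R : Type} [CommRing R] {C : Type} [AddCommGroup C] [Module R C]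
    (hC : Cotorsion R C) (F E : Type) [AddCommGroup F] [Module R F] (hF : Module.Flat R F)
    [AddCommGroup E] [Module R E] (i : C →ₗ[R] E) (p : E →ₗ[R] F)
    (hi : Function.Injective i) (hker : LinearMap.ker p = LinearMap.range i)
    (hp : Function.Surjective p) :
    ∃ σ : F →ₗ[R] E, ∀ y, p (σ y) = y := by
  let Q : ProjectiveResolution (ModuleCat.of R F) :=
    (HasProjectiveResolution.out (Z := ModuleCat.of R F)).some
  have hlift := (ext_one_subsingleton_iff R (ModuleCat.of R F) (ModuleCat.of R C) Q).1 (hC F hF)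
  -- the augmentation
  let ε : Q.complex.X 0 ⟶ ModuleCat.of R F := Q.π.f 0
  have hεsurj : Function.Surjective ε :=
    (ModuleCat.epi_iff_surjective (ε : Q.complex.X 0 ⟶ ModuleCat.of R F)).1
      (inferInstanceAs (Epi (Q.π.f 0)))
  have hεd : ∀ x, ε (Q.complex.d 1 0 x) = 0 := by
    intro x
    have := Q.complex_d_comp_π_f_zero
    have h2 : (Q.complex.d 1 0 ≫ Q.π.f 0) x = (0 : Q.complex.X 1 ⟶ _) x := by rw [this]
    exact h2
  have hexact : ∀ x : Q.complex.X 0, ε x = 0 → ∃ y, Q.complex.d 1 0 y = x := by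
    intro x hx
    exact (ShortComplex.moduleCat_exact_iff _).1 Q.exact₀ x hx
  -- lift the augmentation through p
  have hpE : Epi (ModuleCat.ofHom p) := (ModuleCat.epi_iff_surjective _).2 hp
  let α : Q.complex.X 0 ⟶ ModuleCat.of R E := Projective.factorThru ε (ModuleCat.ofHom p)
  have hα : ∀ x, p (α x) = ε x := by
    intro x
    have h2 : (α ≫ ModuleCat.ofHom p) x = ε x := by rw [Projective.factorThru_comp]
    exact h2
  -- β : Q₁ → C
  let eC := LinearEquiv.ofInjective i hi
  have hmem : ∀ x : Q.complex.X 1, (α.hom ∘ₗ (Q.complex.d 1 0).hom) x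
      ∈ LinearMap.range i := by
    intro x
    rw [← hker, LinearMap.mem_ker]
    show p (α (Q.complex.d 1 0 x)) = 0
    rw [hα, hεd]
  let β : Q.complex.X 1 ⟶ ModuleCat.of R C :=
    ModuleCat.ofHom (eC.symm.toLinearMap ∘ₗ LinearMap.codRestrict (LinearMap.range i) _ hmem)
  have hiβ : ∀ x, i (β x) = α (Q.complex.d 1 0 x) := by
    intro x
    show i (eC.symm ⟨α (Q.complex.d 1 0 x), hmem x⟩) = α (Q.complex.d 1 0 x)
    have := eC.apply_symm_apply ⟨α (Q.complex.d 1 0 x), hmem x⟩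
    have h3 : ∀ c : C, (eC c : E) = i c := fun c => rfl
    rw [← h3]
    rw [this]
  have hβ2 : Q.complex.d 2 1 ≫ β = 0 := by
    apply ModuleCat.hom_ext
    apply LinearMap.ext
    intro x
    apply hi
    show i (β (Q.complex.d 2 1 x)) = i 0
    rw [hiβ, map_zero]
    have h4 : Q.complex.d 1 0 (Q.complex.d 2 1 x) = (Q.complex.d 2 1 ≫ Q.complex.d 1 0) x := rfl
    rw [h4, Q.complex.d_comp_d 2 1 0]
    exact map_zero α.hom
  obtain ⟨γ, hγ⟩ := hlift β hβ2
  have hγ' : ∀ x, γ (Q.complex.d 1 0 x) = β x := fun x => by rw [← hγ]; rfl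
  -- α' kills the image of d₁
  let αl : (Q.complex.X 0 : Type) →ₗ[R] E := α.hom
  let γl : (Q.complex.X 0 : Type) →ₗ[R] C := γ.hom
  let α' : (Q.complex.X 0 : Type) →ₗ[R] E := αl - i ∘ₗ γl
  have hα'd : ∀ x, α' (Q.complex.d 1 0 x) = 0 := by
    intro x
    have e1 : α' (Q.complex.d 1 0 x) = αl (Q.complex.d 1 0 x) - i (γl (Q.complex.d 1 0 x)) := rfl
    have h5 : γl (Q.complex.d 1 0 x) = β x := hγ' x
    have h6 : i (β x) = αl (Q.complex.d 1 0 x) := hiβ x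
    rw [e1, h5, ← h6, sub_self]
  -- descend along ε
  have hle : LinearMap.ker ε.hom ≤ LinearMap.ker α' := by
    intro x hx
    obtain ⟨y, hy⟩ := hexact x hx
    rw [LinearMap.mem_ker, ← hy, hα'd]
  let q := ε.hom.quotKerEquivOfSurjective hεsurj
  let σ : F →ₗ[R] E := ((LinearMap.ker ε.hom).liftQ α' hle) ∘ₗ
    q.symm.toLinearMap
  refine ⟨σ, fun y => ?_⟩
  obtain ⟨x, hx⟩ := hεsurj y
  have hq : q (Submodule.Quotient.mk x) = y := by
    show ε.hom x = y
    exact hx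
  have hq' : q.symm y = Submodule.Quotient.mk x := by
    rw [← hq, LinearEquiv.symm_apply_apply]
  show p (((LinearMap.ker ε.hom).liftQ α' hle) (q.symm y)) = y
  rw [hq', Submodule.liftQ_apply]
  have e2 : α' x = αl x - i (γl x) := rfl
  rw [e2, map_sub]
  have h7 : p (αl x) = ε x := hα x
  rw [h7]
  have hpi : p (i (γl x)) = 0 := by
    have hm : i (γl x) ∈ LinearMap.ker p := by
      rw [hker]; exact ⟨γl x, rfl⟩
    exact hm
  rw [hpi, sub_zero, hx]

lemma Cotorsion.extend {R : Type} [CommRing R] {C : Type} [AddCommGroup C] [Module R C]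
    (hC : Cotorsion R C) (F P₀ : Type) [AddCommGroup F] [Module R F] (hF : Module.Flat R F)
    [AddCommGroup P₀] [Module R P₀] (π : P₀ →ₗ[R] F) (hπ : Function.Surjective π)
    (h : (LinearMap.ker π : Submodule R P₀) →ₗ[R] C) :
    ∃ g : P₀ →ₗ[R] C, ∀ k : LinearMap.ker π, g k = h k := by
  classical
  let K := LinearMap.ker π
  let φ : K →ₗ[R] C × P₀ := LinearMap.prod h (-(K.subtype))
  let W := LinearMap.range φ
  let mk : C × P₀ →ₗ[R] ((C × P₀) ⧸ W) := W.mkQ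
  let i : C →ₗ[R] ((C × P₀) ⧸ W) := mk ∘ₗ LinearMap.inl R C P₀
  let pbar : C × P₀ →ₗ[R] F := π ∘ₗ LinearMap.snd R C P₀
  have hW : W ≤ LinearMap.ker pbar := by
    rintro _ ⟨k, rfl⟩
    show π (-(k : P₀)) = 0
    rw [map_neg, k.2, neg_zero]
  let p : ((C × P₀) ⧸ W) →ₗ[R] F := W.liftQ pbar hW
  have hi : Function.Injective i := by
    intro a b hab
    have : i (a - b) = 0 := by rw [map_sub, hab, sub_self]
    have hmem : ((a - b, 0) : C × P₀) ∈ W := by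
      rwa [← Submodule.Quotient.mk_eq_zero W]
    obtain ⟨k, hk⟩ := hmem
    have hk1 : h k = a - b := congrArg Prod.fst hk
    have hk2 : -(k : P₀) = 0 := congrArg Prod.snd hk
    have hk0 : k = 0 := by
      ext
      simpa [neg_eq_zero] using hk2
    rw [hk0, map_zero] at hk1
    exact sub_eq_zero.mp hk1.symm
  have hpsurj : Function.Surjective p := by
    intro y
    obtain ⟨x, hx⟩ := hπ y
    exact ⟨mk (0, x), hx⟩
  have hkerp : LinearMap.ker p = LinearMap.range i := by
    apply le_antisymm
    · intro e he
      obtain ⟨⟨c, x⟩, rfl⟩ := W.mkQ_surjective e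
      have hx : x ∈ K := by
        have : π x = 0 := he
        exact this
      refine ⟨c + h ⟨x, hx⟩, ?_⟩
      have : ((c + h ⟨x, hx⟩, 0) : C × P₀) - (c, x) ∈ W := by
        refine ⟨⟨x, hx⟩, ?_⟩
        show (h ⟨x, hx⟩, -x) = _
        ext
        · show h ⟨x, hx⟩ = c + h ⟨x, hx⟩ - c
          abel
        · show -x = 0 - x
          abel
      show mk (c + h ⟨x, hx⟩, 0) = mk (c, x)
      rwa [← sub_eq_zero, ← map_sub, ← LinearMap.mem_ker, Submodule.ker_mkQ]
    · rintro _ ⟨c, rfl⟩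
      show π 0 = 0
      exact map_zero π
  obtain ⟨σ, hσ⟩ := hC.exists_section F ((C × P₀) ⧸ W) hF i p hi hkerp hpsurj
  -- retraction r of i
  let τ : ((C × P₀) ⧸ W) →ₗ[R] ((C × P₀) ⧸ W) := LinearMap.id - σ ∘ₗ p
  have hτ : ∀ e, τ e ∈ LinearMap.range i := by
    intro e
    rw [← hkerp, LinearMap.mem_ker]
    show p (e - σ (p e)) = 0
    rw [map_sub, hσ, sub_self]
  let eC := LinearEquiv.ofInjective i hi
  let r : ((C × P₀) ⧸ W) →ₗ[R] C :=
    eC.symm.toLinearMap ∘ₗ LinearMap.codRestrict (LinearMap.range i) τ hτ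
  have hri : ∀ c : C, r (i c) = c := by
    intro c
    have hτi : τ (i c) = i c := by
      show i c - σ (p (i c)) = i c
      have : p (i c) = 0 := by
        rw [← LinearMap.mem_ker, hkerp]; exact ⟨c, rfl⟩
      rw [this, map_zero, sub_zero]
    have : r (i c) = eC.symm ⟨τ (i c), hτ (i c)⟩ := rfl
    rw [this]
    have he : (⟨τ (i c), hτ (i c)⟩ : LinearMap.range i) = eC c := by
      ext
      show τ (i c) = i c
      exact hτi
    rw [he, LinearEquiv.symm_apply_apply]
  refine ⟨r ∘ₗ mk ∘ₗ LinearMap.inr R C P₀, fun k => ?_⟩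
  show r (mk (0, (k : P₀))) = h k
  have : mk (0, (k : P₀)) = i (h k) := by
    show mk (0, (k : P₀)) = mk (h k, 0)
    rw [← sub_eq_zero, ← map_sub, ← LinearMap.mem_ker, Submodule.ker_mkQ]
    refine ⟨-k, ?_⟩
    show (h (-k), -(((-k : K) : P₀))) = (0, (k : P₀)) - (h k, 0)
    ext
    · show h (-k) = 0 - h k
      rw [map_neg, zero_sub]
    · show -((-k : K) : P₀) = (k : P₀) - 0
      simp
  rw [this, hri]

lemma Cotorsion.lift_of_exact {R : Type} [CommRing R] {C : Type} [AddCommGroup C] [Module R C]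
    (hC : Cotorsion R C) {P₂ P₁ P₀ F : Type}
    [AddCommGroup P₂] [Module R P₂] [AddCommGroup P₁] [Module R P₁]
    [AddCommGroup P₀] [Module R P₀] [AddCommGroup F] [Module R F]
    (hF : Module.Flat R F)
    (d₂ : P₂ →ₗ[R] P₁) (d₁ : P₁ →ₗ[R] P₀) (ε : P₀ →ₗ[R] F)
    (hd : ∀ x, d₁ x = 0 → ∃ y, d₂ y = x) (hε : ∀ x, ε x = 0 → ∃ y, d₁ y = x)
    (hεd : ∀ x, ε (d₁ x) = 0) (hsurj : Function.Surjective ε)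
    (f : P₁ →ₗ[R] C) (hf : ∀ x, f (d₂ x) = 0) :
    ∃ g : P₀ →ₗ[R] C, ∀ x, g (d₁ x) = f x := by
  have hker : LinearMap.ker d₁ ≤ LinearMap.ker f := by
    intro x hx
    obtain ⟨y, hy⟩ := hd x hx
    rw [LinearMap.mem_ker, ← hy, hf]
  have heq : LinearMap.range d₁ = LinearMap.ker ε := by
    apply le_antisymm
    · rintro _ ⟨x, rfl⟩
      exact hεd x
    · intro x hx
      exact hε x hx
  let f0 : (P₁ ⧸ LinearMap.ker d₁) →ₗ[R] C := (LinearMap.ker d₁).liftQ f hker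
  let e1 := d₁.quotKerEquivRange
  let h : (LinearMap.ker ε : Submodule R P₀) →ₗ[R] C :=
    f0 ∘ₗ e1.symm.toLinearMap ∘ₗ (LinearEquiv.ofEq _ _ heq.symm).toLinearMap
  obtain ⟨g, hg⟩ := hC.extend F P₀ hF ε hsurj h
  refine ⟨g, fun x => ?_⟩
  have hmem : d₁ x ∈ LinearMap.ker ε := heq ▸ ⟨x, rfl⟩
  have := hg ⟨d₁ x, hmem⟩
  rw [this]
  show f0 (e1.symm ((LinearEquiv.ofEq _ _ heq.symm) ⟨d₁ x, hmem⟩)) = f x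
  have h1 : (LinearEquiv.ofEq _ _ heq.symm) (⟨d₁ x, hmem⟩ : LinearMap.ker ε)
      = ⟨d₁ x, ⟨x, rfl⟩⟩ := rfl
  rw [h1]
  have h2 : e1.symm ⟨d₁ x, ⟨x, rfl⟩⟩ = Submodule.Quotient.mk x := by
    rw [LinearEquiv.symm_apply_eq]
    ext
    exact (d₁.quotKerEquivRange_apply_mk x).symm
  rw [h2]
  exact Submodule.liftQ_apply _ f x

/-- If `R → S` is a homomorphism of commutative rings making `S` a flat
`R`-module and `C` is a cotorsion `R`-module, then `Hom_R(S, C)`, with its natural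
`S`-module structure, is a cotorsion `S`-module. -/
theorem cotorsion_coextension_of_scalars (R S : Type) [CommRing R] [CommRing S]
    [Algebra R S] [Module.Flat R S] (C : Type) [AddCommGroup C] [Module R C]
    (hC : Cotorsion R C) :
    Cotorsion S
      ((ModuleCat.coextendScalars (algebraMap R S)).obj (ModuleCat.of R C)) := by
  intro F _ _ hF
  let M₀ := (ModuleCat.coextendScalars (algebraMap R S)).obj (ModuleCat.of R C)
  let P : ProjectiveResolution (ModuleCat.of S F) :=
    (HasProjectiveResolution.out (Z := ModuleCat.of S F)).some
  rw [ext_one_subsingleton_iff S (ModuleCat.of S F) (ModuleCat.of S M₀) P]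
  intro f hf
  -- R-module structures by restriction of scalars
  letI m2 : Module R (P.complex.X 2) := Module.compHom _ (algebraMap R S)
  letI m1 : Module R (P.complex.X 1) := Module.compHom _ (algebraMap R S)
  letI m0 : Module R (P.complex.X 0) := Module.compHom _ (algebraMap R S)
  letI mF : Module R F := Module.compHom F (algebraMap R S)
  letI tF : IsScalarTower R S F :=
    ⟨fun r s x => by rw [Algebra.smul_def, mul_smul]; rfl⟩
  haveI flatRF : Module.Flat R F := Module.Flat.trans R S F
  -- the differentials and augmentation, S-linearly and R-linearly
  let d2 : (P.complex.X 2 : Type) →ₗ[S] P.complex.X 1 := (P.complex.d 2 1).hom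
  let d1 : (P.complex.X 1 : Type) →ₗ[S] P.complex.X 0 := (P.complex.d 1 0).hom
  let ε : (P.complex.X 0 : Type) →ₗ[S] F := (P.π.f 0).hom
  let d2R : (P.complex.X 2 : Type) →ₗ[R] P.complex.X 1 :=
    { toFun := d2, map_add' := d2.map_add,
      map_smul' := fun r x => d2.map_smul (algebraMap R S r) x }
  let d1R : (P.complex.X 1 : Type) →ₗ[R] P.complex.X 0 :=
    { toFun := d1, map_add' := d1.map_add,
      map_smul' := fun r x => d1.map_smul (algebraMap R S r) x }
  let εR : (P.complex.X 0 : Type) →ₗ[R] F :=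
    { toFun := ε, map_add' := ε.map_add,
      map_smul' := fun r x => ε.map_smul (algebraMap R S r) x }
  -- the R-linear map induced by f
  let fS : (P.complex.X 1 : Type) →ₗ[S] M₀ := f.hom
  let f' : ((ModuleCat.restrictScalars (algebraMap R S)).obj (P.complex.X 1)) ⟶
      ModuleCat.of R C :=
    ModuleCat.RestrictionCoextensionAdj.HomEquiv.toRestriction (algebraMap R S) f
  let f'' : (P.complex.X 1 : Type) →ₗ[R] C := f'.hom
  let vM : (↥M₀) →
      (((ModuleCat.restrictScalars (algebraMap R S)).obj (ModuleCat.of S S) : Type) →ₗ[R] C) :=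
    fun φ => φ
  have hf' : ∀ x, f'' (d2R x) = 0 := by
    intro x
    have h0 : fS (d2 x) = 0 := by
      have h00 : (P.complex.d 2 1 ≫ f) x = (0 : P.complex.X 2 ⟶ ModuleCat.of S ↑M₀) x := by
        rw [hf]
      exact h00
    calc f'' (d2R x) = (vM (fS (d2 x))) ((1 : S)) := rfl
      _ = (vM 0) ((1 : S)) := by rw [h0]
      _ = 0 := rfl
  -- exactness data
  have hd : ∀ x, d1R x = 0 → ∃ y, d2R y = x := by
    intro x hx
    exact (ShortComplex.moduleCat_exact_iff _).1 (P.exact_succ 0) x hx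
  have hε : ∀ x, εR x = 0 → ∃ y, d1R y = x := by
    intro x hx
    exact (ShortComplex.moduleCat_exact_iff _).1 P.exact₀ x hx
  have hεd : ∀ x, εR (d1R x) = 0 := by
    intro x
    have h2 : (P.complex.d 1 0 ≫ P.π.f 0) x = (0 : P.complex.X 1 ⟶ _) x := by
      rw [P.complex_d_comp_π_f_zero]
    exact h2
  have hsurj : Function.Surjective εR := by
    have : Function.Surjective ε :=
      (ModuleCat.epi_iff_surjective (P.π.f 0 : P.complex.X 0 ⟶ ModuleCat.of S F)).1
        inferInstance
    exact this
  obtain ⟨g, hg⟩ := hC.lift_of_exact flatRF d2R d1R εR hd hε hεd hsurj f'' hf'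
  -- build the S-linear lift
  let gR : ((ModuleCat.restrictScalars (algebraMap R S)).obj (P.complex.X 0)) ⟶
      ModuleCat.of R C := ModuleCat.ofHom g
  let G : P.complex.X 0 ⟶ (ModuleCat.coextendScalars (algebraMap R S)).obj
      (ModuleCat.of R C) :=
    ModuleCat.RestrictionCoextensionAdj.HomEquiv.fromRestriction (algebraMap R S) gR
  refine ⟨G, ?_⟩
  apply ModuleCat.hom_ext
  apply LinearMap.ext
  intro x
  apply LinearMap.ext
  intro s
  have h3 : (show S from s) • (d1 x) = d1 ((show S from s) • x) :=
    (d1.map_smul (show S from s) x).symm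
  have h4 : g (d1R ((show S from s) • x)) = f'' ((show S from s) • x) :=
    hg ((show S from s) • x)
  have h5 : f'' ((show S from s) • x) = (vM (fS ((show S from s) • x))) ((1 : S)) := rfl
  have h6 : fS ((show S from s) • x) = (show S from s) • fS x :=
    fS.map_smul (show S from s) x
  have h7 : (vM ((show S from s) • fS x)) ((1 : S)) =
      (vM (fS x)) (((1 * (show S from s) : S))) := rfl
  show g ((show S from s) • (d1 x)) = (vM (fS x)) (show S from s)
  rw [h3]
  rw [show g (d1 ((show S from s) • x)) = g (d1R ((show S from s) • x)) from rfl]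
  rw [h4, h5, h6, h7, one_mul]
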